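/- Under the hypotheses of Theorem 1 (the semi-monotone sufficient descent condition, the lower bound F(x_{k+1}) − R_k ≥ −(α_k²/2)L‖d_k‖² + α_k Δ_k, and convexity of c), one has the key bound |F(x_{k+1}) − R_k − α_k Δ_k| ≤ (α_k²/2) L ‖d_k‖². -/

import Mathlib

/-! The lower half of the bound is the hypothesis on `F x₁ - R`. The upper half follows from
`F x₁ ≤ F xₖ + α Δ + (α² / 2) L ‖dₖ‖²` and `F xₖ ≤ R`, where the first inequality adds the descent
lemma for `f` to convexity of `c` on the segment from `xₖ` to `xₖ + dₖ`. The descent lemma is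
proved without integrating the gradient: `t ↦ f (x + t v) - t ⟪g x, v⟫ - (L / 2) t² ‖v‖²` has
nonpositive derivative on `[0, 1]` by Cauchy–Schwarz and the Lipschitz bound, hence is antitone. -/

open RealInnerProductSpace

theorem ConvexOn.apply_add_smul_le {E : Type*} [AddCommGroup E] [Module ℝ E] {c : E → ℝ}
    (hc : ConvexOn ℝ Set.univ c) (x d : E) {α : ℝ} (hα0 : 0 ≤ α) (hα1 : α ≤ 1) :
    c (x + α • d) ≤ c x + α * (c (x + d) - c x) := by
  have hseg : x + α • d = (1 - α) • x + α • (x + d) := by module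
  calc c (x + α • d) ≤ (1 - α) * c x + α * c (x + d) := by
        rw [hseg]; exact hc.2 trivial trivial (by linarith) hα0 (by ring)
    _ = c x + α * (c (x + d) - c x) := by ring

section Descent

variable {E : Type*} [NormedAddCommGroup E] [InnerProductSpace ℝ E] [CompleteSpace E]
  {f : E → ℝ} {g : E → E}

theorem HasGradientAt.hasDerivAt_comp_add_smul {x v g' : E} {t : ℝ}
    (hf : HasGradientAt f g' (x + t • v)) :
    HasDerivAt (fun s : ℝ => f (x + s • v)) ⟪g', v⟫ t := by
  have hline : HasDerivAt (fun s : ℝ => x + s • v) v t := by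
    simpa using ((hasDerivAt_id t).smul_const v).const_add x
  have hcomp := hf.hasFDerivAt.comp_hasDerivAt t hline
  simp only [InnerProductSpace.toDual_apply_apply] at hcomp
  exact hcomp

theorem descent_lemma (hf : ∀ x, HasGradientAt f (g x) x) {L : ℝ}
    (hlip : ∀ x y, ‖g x - g y‖ ≤ L * ‖x - y‖) (x v : E) :
    f (x + v) ≤ f x + ⟪g x, v⟫ + L / 2 * ‖v‖ ^ 2 := by
  set φ : ℝ → ℝ := fun t => f (x + t • v) - t * ⟪g x, v⟫ - L / 2 * t ^ 2 * ‖v‖ ^ 2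
  have hφ : ∀ t, HasDerivAt φ (⟪g (x + t • v), v⟫ - ⟪g x, v⟫ - L * t * ‖v‖ ^ 2) t := by
    intro t
    have hline := (hf (x + t • v)).hasDerivAt_comp_add_smul (x := x)
    have := (hline.sub ((hasDerivAt_id t).mul_const ⟪g x, v⟫)).sub
      (((hasDerivAt_pow 2 t).const_mul (L / 2)).mul_const (‖v‖ ^ 2))
    exact this.congr_deriv (by ring)
  have hφ'_nonpos : ∀ t ∈ interior (Set.Icc (0 : ℝ) 1),
      ⟪g (x + t • v), v⟫ - ⟪g x, v⟫ - L * t * ‖v‖ ^ 2 ≤ 0 := by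
    intro t ht
    rw [interior_Icc] at ht
    calc ⟪g (x + t • v), v⟫ - ⟪g x, v⟫ - L * t * ‖v‖ ^ 2
        = ⟪g (x + t • v) - g x, v⟫ - L * t * ‖v‖ ^ 2 := by rw [inner_sub_left]
      _ ≤ ‖g (x + t • v) - g x‖ * ‖v‖ - L * t * ‖v‖ ^ 2 := by
          gcongr; exact real_inner_le_norm _ _
      _ ≤ L * ‖(x + t • v) - x‖ * ‖v‖ - L * t * ‖v‖ ^ 2 := by
          gcongr; exact hlip _ _
      _ = 0 := by
          rw [add_sub_cancel_left, norm_smul, Real.norm_of_nonneg ht.1.le]; ring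
  have hanti : AntitoneOn φ (Set.Icc 0 1) :=
    antitoneOn_of_hasDerivWithinAt_nonpos (convex_Icc 0 1)
      (HasDerivAt.continuousOn fun t _ => hφ t)
      (fun t _ => (hφ t).hasDerivWithinAt) hφ'_nonpos
  have := hanti (Set.left_mem_Icc.2 zero_le_one) (Set.right_mem_Icc.2 zero_le_one) zero_le_one
  norm_num [φ] at this
  linarith

theorem composite_descent_lemma {c : E → ℝ} (hf : ∀ x, HasGradientAt f (g x) x) {L : ℝ}
    (hlip : ∀ x y, ‖g x - g y‖ ≤ L * ‖x - y‖) (hc : ConvexOn ℝ Set.univ c) {μ : ℝ} (hμ : 0 ≤ μ)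
    (x d : E) {α : ℝ} (hα0 : 0 ≤ α) (hα1 : α ≤ 1) :
    f (x + α • d) + μ * c (x + α • d) ≤
      f x + μ * c x + α * (⟪d, g x⟫ + μ * (c (x + d) - c x)) + α ^ 2 / 2 * L * ‖d‖ ^ 2 := by
  have hf_step := descent_lemma hf hlip x (α • d)
  rw [real_inner_smul_right, real_inner_comm, norm_smul, Real.norm_of_nonneg hα0] at hf_step
  have hc_step := mul_le_mul_of_nonneg_left (hc.apply_add_smul_le x d hα0 hα1) hμ
  linarith

end Descent

theorem key_abs_bound_general (n : ℕ) (f c : EuclideanSpace ℝ (Fin n) → ℝ)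
    (g : EuclideanSpace ℝ (Fin n) → EuclideanSpace ℝ (Fin n))
    (hdiff : ∀ x, HasGradientAt f (g x) x)
    (L : ℝ) (hlip : ∀ x y, ‖g x - g y‖ ≤ L * ‖x - y‖)
    (hc : ConvexOn ℝ Set.univ c) (μ : ℝ) (hμ : 0 < μ)
    (F : EuclideanSpace ℝ (Fin n) → ℝ) (hF : ∀ x, F x = f x + μ * c x)
    (xk dk : EuclideanSpace ℝ (Fin n)) (Δ : ℝ)
    (hΔdef : Δ = ⟪dk, g xk⟫ + μ * (c (xk + dk) - c xk))
    (α : ℝ) (hα0 : 0 < α) (hα1 : α ≤ 1)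
    (x1 : EuclideanSpace ℝ (Fin n)) (hx1 : x1 = xk + α • dk)
    (R : ℝ) (hR : F xk ≤ R)
    (hlow : F x1 - R ≥ -(α ^ 2 / 2) * L * ‖dk‖ ^ 2 + α * Δ) :
    |F x1 - R - α * Δ| ≤ (α ^ 2 / 2) * L * ‖dk‖ ^ 2 := by
  have hup : F x1 ≤ F xk + α * Δ + α ^ 2 / 2 * L * ‖dk‖ ^ 2 := by
    rw [hF, hF, hx1, hΔdef]
    exact composite_descent_lemma hdiff hlip hc hμ.le xk dk hα0.le hα1
  rw [abs_le]
  constructor <;> linarith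

/-- Key bound `|F(x_{k+1}) − R_k − α_k Δ_k| ≤ (α_k²/2) L ‖d_k‖²`. -/
theorem key_abs_bound (n : ℕ) (f c : EuclideanSpace ℝ (Fin n) → ℝ)
    (g : EuclideanSpace ℝ (Fin n) → EuclideanSpace ℝ (Fin n))
    (hf : ConvexOn ℝ Set.univ f) (hdiff : ∀ x, HasGradientAt f (g x) x)
    (L : ℝ) (hL : 0 < L) (hlip : ∀ x y, ‖g x - g y‖ ≤ L * ‖x - y‖)
    (hc : ConvexOn ℝ Set.univ c) (μ : ℝ) (hμ : 0 < μ)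
    (F : EuclideanSpace ℝ (Fin n) → ℝ) (hF : ∀ x, F x = f x + μ * c x)
    (xk dk : EuclideanSpace ℝ (Fin n)) (Δ : ℝ)
    (hΔdef : Δ = ⟪dk, g xk⟫ + μ * (c (xk + dk) - c xk))
    (α : ℝ) (hα0 : 0 < α) (hα1 : α ≤ 1)
    (x1 : EuclideanSpace ℝ (Fin n)) (hx1 : x1 = xk + α • dk)
    (R : ℝ) (hR : F xk ≤ R)
    (hlow : F x1 - R ≥ -(α ^ 2 / 2) * L * ‖dk‖ ^ 2 + α * Δ) :
    |F x1 - R - α * Δ| ≤ (α ^ 2 / 2) * L * ‖dk‖ ^ 2 :=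
  key_abs_bound_general n f c g hdiff L hlip hc μ hμ F hF xk dk Δ hΔdef α hα0 hα1 x1 hx1 R hR hlow
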